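/- The duplication cost of reconciliation does not satisfy the triangle inequality: there exist rooted binary trees P, G′, S on six leaves each (leaf sets in bijection, maps given by the bijections) such that D(g(P), S) > C(P, G′) + D(G′, S). -/
import Mathlib


inductive BTree (α : Type) : Type
  | leaf : α → BTree α
  | node : BTree α → BTree α → BTree α
deriving DecidableEq

namespace BTree

variable {α β : Type} [DecidableEq α] [DecidableEq β]

/-- The set of leaf labels of a tree. -/
def leaves : BTree α → Finset α
  | leaf a => {a}
  | node l r => leaves l ∪ leaves r

/-- Number of leaves. -/
def leafCount : BTree α → ℕ
  | leaf _ => 1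
  | node l r => leafCount l + leafCount r

/-- Number of internal nodes. -/
def internalCount : BTree α → ℕ
  | leaf _ => 0
  | node l r => internalCount l + internalCount r + 1

/-- The nodes of a tree, identified with the subtrees they root. -/
def nodes : BTree α → List (BTree α)
  | leaf a => [leaf a]
  | node l r => node l r :: (nodes l ++ nodes r)

/-- `Anc t u` : `u` is a node of (the subtree rooted at) `t`,
i.e. `t` is an ancestor of `u` (possibly `t = u`). -/
def Anc (t u : BTree α) : Prop := u ∈ nodes t

/-- All leaf labels are pairwise distinct. -/
def distinctLeaves : BTree α → Prop
  | leaf _ => True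
  | node l r => Disjoint (leaves l) (leaves r) ∧ distinctLeaves l ∧ distinctLeaves r

/-- The (subtree rooted at the) lowest common ancestor of a set `L` of leaf labels. -/
def lca : BTree α → Finset α → BTree α
  | leaf a, _ => leaf a
  | node l r, L =>
    if L ⊆ leaves l then lca l L
    else if L ⊆ leaves r then lca r L
    else node l r

/-- LCA-extension of a leaf map `s : α → β` : the image in the lower tree `S` of a node
`x` of the upper tree, namely the lca in `S` of the images of the leaves below `x`. -/
def mapLca (S : BTree β) (s : α → β) (x : BTree α) : BTree β :=
  lca S ((leaves x).image s)

/-- Depth of the node `u` below the node `t` (number of edges on the path). -/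
def depthOf : BTree α → BTree α → ℕ
  | leaf _, _ => 0
  | node l r, u =>
    if node l r = u then 0
    else if u ∈ nodes l then depthOf l u + 1 else depthOf r u + 1

inductive GLabel : Type
  | Spec | Dup
deriving DecidableEq

/-- LCA-reconciliation labeling of the nodes of a gene tree with respect to
a species tree `S` (internal nodes only; leaves get the dummy label `Spec`). -/
def glab (S : BTree β) (s : α → β) : BTree α → GLabel
  | leaf _ => GLabel.Spec
  | node l r =>
    if mapLca S s (node l r) ≠ mapLca S s l ∧ mapLca S s (node l r) ≠ mapLca S s r
    then GLabel.Spec else GLabel.Dup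

/-- Duplication cost `D(G,S)` : number of internal nodes labeled `Dup`. -/
def dupCost (S : BTree β) (s : α → β) : BTree α → ℕ
  | leaf _ => 0
  | node l r =>
    (if glab S s (node l r) = GLabel.Dup then 1 else 0) + dupCost S s l + dupCost S s r

/-- Losses induced on the edge from `x` to its child `y`. -/
def lossEdge (S : BTree β) (s : α → β) (x y : BTree α) : ℕ :=
  if mapLca S s x = mapLca S s y then 0
  else (depthOf (mapLca S s x) (mapLca S s y) - 1) +
    (if glab S s x = GLabel.Dup then 1 else 0)

/-- Loss cost `L(G,S)` : total number of losses induced on the edges of `G`. -/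
def lossCost (S : BTree β) (s : α → β) : BTree α → ℕ
  | leaf _ => 0
  | node l r =>
    lossEdge S s (node l r) l + lossEdge S s (node l r) r + lossCost S s l + lossCost S s r

inductive PLabel : Type
  | Spec | Dup | Creat
deriving DecidableEq

/-- LCA-reconciliation labeling of the nodes of a protein tree `P` with respect to a
gene tree `G` (with its own labeling `lG`); leaves get the dummy label `Creat`. -/
def plab (G : BTree β) (g : α → β) (lG : BTree β → GLabel) : BTree α → PLabel
  | leaf _ => PLabel.Creat
  | node l r =>
    if mapLca G g (node l r) ≠ mapLca G g l ∧ mapLca G g (node l r) ≠ mapLca G g r then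
      (match lG (mapLca G g (node l r)) with
        | GLabel.Spec => PLabel.Spec
        | GLabel.Dup => PLabel.Dup)
    else PLabel.Creat

/-- Creation cost `C(P,G)` : number of internal nodes of `P` labeled `Creat`. -/
def creatCost (G : BTree β) (g : α → β) (lG : BTree β → GLabel) : BTree α → ℕ
  | leaf _ => 0
  | node l r =>
    (if plab G g lG (node l r) = PLabel.Creat then 1 else 0) +
      creatCost G g lG l + creatCost G g lG r

/-- Protein losses induced on the edge from `x` to its child `y`. -/
def plossEdge (G : BTree β) (g : α → β) (lG : BTree β → GLabel) (x y : BTree α) : ℕ :=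
  if mapLca G g x = mapLca G g y then 0
  else (depthOf (mapLca G g x) (mapLca G g y) - 1) +
    (if plab G g lG x = PLabel.Creat then 1 else 0)

/-- Protein loss cost `L(P,G)`. -/
def plossCost (G : BTree β) (g : α → β) (lG : BTree β → GLabel) : BTree α → ℕ
  | leaf _ => 0
  | node l r =>
    plossEdge G g lG (node l r) l + plossEdge G g lG (node l r) r +
      plossCost G g lG l + plossCost G g lG r

/-- Relabel the leaves of a tree via `f` (e.g. `g(P)`). -/
def relabel (f : α → β) : BTree α → BTree β
  | leaf a => leaf (f a)
  | node l r => node (relabel f l) (relabel f r)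

end BTree


open BTree

instance BTree.decDistinct {α : Type} [DecidableEq α] :
    ∀ t : BTree α, Decidable (distinctLeaves t)
  | leaf _ => .isTrue trivial
  | node l r =>
    have := decDistinct l
    have := decDistinct r
    by unfold distinctLeaves; infer_instance

theorem creat_eq_dup {α β : Type} [DecidableEq α] [DecidableEq β]
    (G : BTree β) (g : α → β) (lG : BTree β → GLabel) :
    ∀ t : BTree α, creatCost G g lG t = dupCost G g t
  | leaf _ => rfl
  | node l r => by
    simp only [creatCost, dupCost, plab, glab, creat_eq_dup G g lG l, creat_eq_dup G g lG r]
    split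
    · cases lG (mapLca G g (node l r)) <;> simp
    · simp

open BTree in
/-- the duplication cost does not satisfy the triangle inequality: there
exist rooted binary trees `P`, `G'`, `S` on six leaves each (leaf sets identified, maps
being identities) with `D(g(P), S) > C(P, G') + D(G', S)`. -/
theorem stmt9 :
    ∃ P G' S : BTree (Fin 6),
      P.leaves = Finset.univ ∧ G'.leaves = Finset.univ ∧ S.leaves = Finset.univ ∧
      P.distinctLeaves ∧ G'.distinctLeaves ∧ S.distinctLeaves ∧
      ∀ lG : BTree (Fin 6) → BTree.GLabel,
        dupCost S id P > creatCost G' id lG P + dupCost S id G' := by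
  refine ⟨(node (node (leaf 0) (node (leaf 1) (leaf 2))) (node (leaf 3) (node (leaf 4) (leaf 5)))), (node (node (leaf 0) (leaf 3)) (node (leaf 1) (node (leaf 2) (node (leaf 4) (leaf 5))))), (node (node (leaf 0) (leaf 1)) (node (leaf 2) (node (node (leaf 3) (leaf 4)) (leaf 5)))),
    by decide, by decide, by decide, by decide, by decide, by decide, ?_⟩
  intro lG
  rw [creat_eq_dup]
  decide
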